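/- Fix e > 1. If ν is a ribbon with cont(ν) = mδ for some m ≥ 1 (δ = α_0 + ... + α_{e-1}), then ν has an SE-removable ribbon of content δ. -/

import Mathlib

open Finset

abbrev Node : Type := ℤ × ℤ

/-- `v` is weakly southeast of `u` (product order). -/
def SE (u v : Node) : Prop := u.1 ≤ v.1 ∧ u.2 ≤ v.2

/-- `v` is weakly northeast of `u` (`u ↗ v`). -/
def NEr (u v : Node) : Prop := v.1 ≤ u.1 ∧ u.2 ≤ v.2

/-- `v` is strictly northeast of `u` (`u ⇗ v`). -/
def SNE (u v : Node) : Prop := v.1 < u.1 ∧ u.2 < v.2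

def IsSkew (τ : Finset Node) : Prop :=
  ∀ u ∈ τ, ∀ w ∈ τ, ∀ v : Node, SE u v → SE v w → v ∈ τ

def Adj (u v : Node) : Prop :=
  v = u + (1, 0) ∨ v = u + (-1, 0) ∨ v = u + (0, 1) ∨ v = u + (0, -1)

def PathIn (τ : Finset Node) (u v : Node) : Prop :=
  Relation.ReflTransGen (fun a b => a ∈ τ ∧ b ∈ τ ∧ Adj a b) u v

def IsConnectedShape (τ : Finset Node) : Prop :=
  ∀ u ∈ τ, ∀ v ∈ τ, PathIn τ u v

def Cornered (τ : Finset Node) : Prop :=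
  (∀ u ∈ τ, ∀ u' ∈ τ, (u + (1, 0) ∉ τ ∧ u + (0, -1) ∉ τ) →
      (u' + (1, 0) ∉ τ ∧ u' + (0, -1) ∉ τ) → u = u') ∧
  (∀ v ∈ τ, ∀ v' ∈ τ, (v + (-1, 0) ∉ τ ∧ v + (0, 1) ∉ τ) →
      (v' + (-1, 0) ∉ τ ∧ v' + (0, 1) ∉ τ) → v = v')

def DiagConvex (τ : Finset Node) : Prop :=
  ∀ u ∈ τ, ∀ w ∈ τ, ∀ v : Node,
    u.2 - u.1 = v.2 - v.1 → v.2 - v.1 = w.2 - w.1 → SE u v → SE v w → v ∈ τ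

def Thin (τ : Finset Node) : Prop :=
  ∀ u ∈ τ, ∀ v ∈ τ, u.2 - u.1 = v.2 - v.1 → u = v

def IsRibbon (ξ : Finset Node) : Prop :=
  ξ.Nonempty ∧ IsSkew ξ ∧ IsConnectedShape ξ ∧ Thin ξ

def MaxSW (τ : Finset Node) (u : Node) : Prop :=
  u ∈ τ ∧ ∀ v ∈ τ, NEr v u → v = u

def MaxNE (τ : Finset Node) (v : Node) : Prop :=
  v ∈ τ ∧ ∀ w ∈ τ, NEr v w → w = v

def IsNEPath (z : ℕ → Node) (k : ℕ) : Prop :=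
  ∀ i, i + 1 < k → z (i + 1) = z i + (-1, 0) ∨ z (i + 1) = z i + (0, 1)

def IsSEPath (z : ℕ → Node) (k : ℕ) : Prop :=
  ∀ i, i + 1 < k → z (i + 1) = z i + (1, 0) ∨ z (i + 1) = z i + (0, 1)

def SERemovable (τ μ : Finset Node) : Prop :=
  μ ⊆ τ ∧ ∀ u ∈ μ, ∀ v ∈ τ \ μ, ¬ SE u v

/-- Residue of a node, in `ZMod e`. -/
def res (e : ℕ) (u : Node) : ZMod e := ((u.2 - u.1 : ℤ) : ZMod e)

/-- Content of a finite set of nodes, as an element of the free module on `ZMod e`. -/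
def cont (e : ℕ) (τ : Finset Node) : ZMod e → ℤ :=
  fun i => ((τ.filter (fun u => res e u = i)).card : ℤ)

/-- `α(t,h) = α_t + α_{t+1} + ⋯ + α_{t+h-1}` (indices mod `e`). -/
def alphaR (e : ℕ) (t : ZMod e) (h : ℕ) : ZMod e → ℤ :=
  fun i => (((Finset.range h).filter (fun j : ℕ => t + ((j : ℕ) : ZMod e) = i)).card : ℤ)

def IsPosRoot (e : ℕ) (β : ZMod e → ℤ) : Prop :=
  ∃ t : ZMod e, ∃ h : ℕ, 1 ≤ h ∧ β = alphaR e t h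

/-- The null root `δ = α_0 + ⋯ + α_{e-1}`. -/
def deltaR (e : ℕ) : ZMod e → ℤ := fun _ => 1

/-- Imaginary elements: positive multiples of `δ`. -/
def IsImag (e : ℕ) (β : ZMod e → ℤ) : Prop :=
  ∃ m : ℕ, 1 ≤ m ∧ β = fun _ => (m : ℤ)

/-- Indivisible positive roots `Ψ`: real positive roots together with `δ`. -/
def IsIndiv (e : ℕ) (β : ZMod e → ℤ) : Prop :=
  (∃ t : ZMod e, ∃ h : ℕ, 1 ≤ h ∧ ¬ (e ∣ h) ∧ β = alphaR e t h) ∨ β = deltaR e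

/-- A convex preorder on the positive roots. -/
def ConvexPreorder (e : ℕ) (R : (ZMod e → ℤ) → (ZMod e → ℤ) → Prop) : Prop :=
  (∀ β, IsPosRoot e β → R β β) ∧
  (∀ β γ ν, IsPosRoot e β → IsPosRoot e γ → IsPosRoot e ν →
      R β γ → R γ ν → R β ν) ∧
  (∀ β γ, IsPosRoot e β → IsPosRoot e γ → (R β γ ∨ R γ β)) ∧
  (∀ β γ, IsPosRoot e β → IsPosRoot e γ → R β γ → IsPosRoot e (β + γ) →
      R β (β + γ) ∧ R (β + γ) γ) ∧
  (∀ β γ, IsPosRoot e β → IsPosRoot e γ →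
      ((R β γ ∧ R γ β) ↔ (β = γ ∨ (IsImag e β ∧ IsImag e γ))))

/-- `β ≻ γ`. -/
def StrictR (e : ℕ) (R : (ZMod e → ℤ) → (ZMod e → ℤ) → Prop)
    (β γ : ZMod e → ℤ) : Prop := R β γ ∧ ¬ R γ β

/-- `θ` is a sum of positive roots strictly smaller than `β`. -/
def SumRootsLt (e : ℕ) (R : (ZMod e → ℤ) → (ZMod e → ℤ) → Prop)
    (β θ : ZMod e → ℤ) : Prop :=
  ∃ k : ℕ, ∃ γ : Fin k → (ZMod e → ℤ),
    (∀ i, IsPosRoot e (γ i) ∧ StrictR e R β (γ i)) ∧ θ = ∑ i, γ i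

/-- `θ` is a sum of positive roots strictly greater than `β`. -/
def SumRootsGt (e : ℕ) (R : (ZMod e → ℤ) → (ZMod e → ℤ) → Prop)
    (β θ : ZMod e → ℤ) : Prop :=
  ∃ k : ℕ, ∃ γ : Fin k → (ZMod e → ℤ),
    (∀ i, IsPosRoot e (γ i) ∧ StrictR e R (γ i) β) ∧ θ = ∑ i, γ i

/-- A two-tile tableau `(λ1, λ2)` for `τ`. -/
def IsTableau2 (τ lam1 lam2 : Finset Node) : Prop :=
  IsSkew lam1 ∧ IsSkew lam2 ∧ Disjoint lam1 lam2 ∧ lam1 ∪ lam2 = τ ∧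
  ∀ u ∈ lam2, ∀ v ∈ lam1, ¬ SE u v

/-- A cuspidal skew shape (with respect to the preorder `R`). -/
def IsCuspidal (e : ℕ) (R : (ZMod e → ℤ) → (ZMod e → ℤ) → Prop)
    (τ : Finset Node) : Prop :=
  IsPosRoot e (cont e τ) ∧
  ∀ lam1 lam2 : Finset Node, IsTableau2 τ lam1 lam2 →
    SumRootsLt e R (cont e τ) (cont e lam1) ∧
    SumRootsGt e R (cont e τ) (cont e lam2)

/-- An SE-removable ribbon in `τ`. -/
def SERemRibbon (τ ξ : Finset Node) : Prop := IsRibbon ξ ∧ SERemovable τ ξ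

/-- A minimal SE-removable ribbon in `τ`. -/
def MinSERem (e : ℕ) (R : (ZMod e → ℤ) → (ZMod e → ℤ) → Prop)
    (τ ξ : Finset Node) : Prop :=
  SERemRibbon τ ξ ∧ ∀ ν, SERemRibbon τ ν → R (cont e ν) (cont e ξ)

/-!
A thin skew shape is totally ordered by diagonal: each node lies weakly northeast of the nodes on
lower diagonals. A ribbon `ν` of content `m δ` therefore occupies `e * m` consecutive diagonals
`[d₀, d₀ + e m)`, one node on each, consecutive nodes differing by an up or a right step. The nodes
on `e` consecutive diagonals `[a, a + e)` form a ribbon of content `δ`, and it is SE-removable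
unless the step into diagonal `a` is an up step or the step out of diagonal `a + e - 1` is a right
step. Such a window exists among those starting at `d₀ + k e` with `k < m`, because the first of
them is not entered by any step.
-/

lemma card_filter_eq_one_of_injOn {α β : Type*} [Fintype β] [DecidableEq β] {s : Finset α}
    {f : α → β} (hf : Set.InjOn f s) (hs : #s = Fintype.card β) (y : β) :
    #(s.filter (f · = y)) = 1 := by
  have himage : s.image f = univ := eq_univ_of_card _ (by rw [card_image_of_injOn hf, hs])
  obtain ⟨x, hx, rfl⟩ := mem_image.mp (himage ▸ mem_univ y)
  rw [card_eq_one]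
  refine ⟨x, ext fun z => ?_⟩
  simp only [mem_filter, mem_singleton]
  refine ⟨fun ⟨hz, hfz⟩ => hf hz hx hfz, ?_⟩
  rintro rfl
  exact ⟨hx, rfl⟩

lemma Nat.exists_lt_and_succ_eq_or_not {P : ℕ → Prop} {m : ℕ} (h0 : P 0) (hm : 1 ≤ m) :
    ∃ k < m, P k ∧ (k + 1 = m ∨ ¬P (k + 1)) := by
  classical
  have hle := Nat.findGreatest_le (P := P) (m - 1)
  refine ⟨Nat.findGreatest P (m - 1), by omega, Nat.findGreatest_spec (zero_le _) h0, ?_⟩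
  by_cases h : Nat.findGreatest P (m - 1) + 1 = m
  · exact Or.inl h
  · exact Or.inr (Nat.findGreatest_is_greatest (lt_add_one _) (by omega))

def diagIndex (u : Node) : ℤ := u.2 - u.1

section

variable {τ : Finset Node} {u v w : Node}

lemma Adj.symm (h : Adj u v) : Adj v u := by
  rcases h with h | h | h | h <;> subst h <;> simp [Adj, Prod.ext_iff]

lemma Adj.diagIndex_le_add_one (h : Adj u v) : diagIndex v ≤ diagIndex u + 1 := by
  rcases h with h | h | h | h <;> subst h <;> simp [diagIndex] <;> omega

lemma PathIn.symm (h : PathIn τ u v) : PathIn τ v u := by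
  induction h with
  | refl => exact .refl
  | tail _ hbc ih => exact ih.head ⟨hbc.2.1, hbc.1, hbc.2.2.symm⟩

lemma PathIn.Icc_diagIndex_subset (h : PathIn τ u v) (hu : u ∈ τ) :
    Set.Icc (diagIndex u) (diagIndex v) ⊆ diagIndex '' τ := by
  induction h with
  | refl =>
    intro d hd
    exact ⟨u, hu, le_antisymm hd.1 hd.2⟩
  | @tail b c _ hbc ih =>
    intro d hd
    rcases le_or_gt d (diagIndex b) with hdb | hbd
    · exact ih ⟨hd.1, hdb⟩
    · have := hbc.2.2.diagIndex_le_add_one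
      exact ⟨c, hbc.2.1, by grind⟩

lemma IsConnectedShape.ordConnected_image_diagIndex (h : IsConnectedShape τ) :
    (diagIndex '' ↑τ).OrdConnected := by
  refine ⟨?_⟩
  rintro _ ⟨u, hu, rfl⟩ _ ⟨v, hv, rfl⟩
  exact (h u hu v hv).Icc_diagIndex_subset hu

lemma Thin.injOn_diagIndex (hth : Thin τ) : Set.InjOn diagIndex τ :=
  fun u hu v hv h => hth u hu v hv h

lemma Thin.eq_or_eq_of_SE (hth : Thin τ) (hsk : IsSkew τ) (hu : u ∈ τ) (hv : v ∈ τ)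
    (h : SE u v) : u.1 = v.1 ∨ u.2 = v.2 := by
  by_contra! hne
  obtain ⟨h1, h2⟩ := h
  have hmem : (u.1 + 1, u.2 + 1) ∈ τ :=
    hsk u hu v hv _ ⟨by simp, by simp⟩ ⟨by simp; omega, by simp; omega⟩
  have := hth u hu _ hmem (by simp)
  simp [Prod.ext_iff] at this

lemma Thin.nEr_of_diagIndex_le (hth : Thin τ) (hsk : IsSkew τ) (hu : u ∈ τ) (hv : v ∈ τ)
    (h : diagIndex u ≤ diagIndex v) : NEr u v := by
  unfold diagIndex at h
  unfold NEr
  rcases le_total u.1 v.1 with h1 | h1 <;> rcases le_total u.2 v.2 with h2 | h2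
  · rcases hth.eq_or_eq_of_SE hsk hu hv ⟨h1, h2⟩ with h3 | h3 <;> omega
  · omega
  · omega
  · rcases hth.eq_or_eq_of_SE hsk hv hu ⟨h1, h2⟩ with h3 | h3 <;> omega

lemma Thin.adj_of_diagIndex_eq_add_one (hth : Thin τ) (hsk : IsSkew τ) (hu : u ∈ τ) (hv : v ∈ τ)
    (h : diagIndex v = diagIndex u + 1) : Adj u v := by
  have := hth.nEr_of_diagIndex_le hsk hu hv (by omega)
  unfold NEr diagIndex at *
  simp only [Adj, Prod.ext_iff, Prod.fst_add, Prod.snd_add]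
  omega

lemma Thin.isConnectedShape (hth : Thin τ) (hsk : IsSkew τ)
    (hgap : (diagIndex '' ↑τ).OrdConnected) : IsConnectedShape τ := by
  have key : ∀ n : ℕ, ∀ u ∈ τ, ∀ v ∈ τ, diagIndex v = diagIndex u + n → PathIn τ u v := by
    intro n
    induction n with
    | zero =>
      intro u hu v hv h
      obtain rfl : u = v := hth u hu v hv (by simp only [Nat.cast_zero, add_zero] at h; exact h.symm)
      exact .refl
    | succ n ih =>
      intro u hu v hv h
      obtain ⟨w, hw, hwd⟩ :=
        hgap.out ⟨u, hu, rfl⟩ ⟨v, hv, rfl⟩ (⟨by omega, by omega⟩ : diagIndex u + n ∈ Set.Icc _ _)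
      exact (ih u hu w hw hwd).tail ⟨hw, hv, hth.adj_of_diagIndex_eq_add_one hsk hw hv (by omega)⟩
  intro u hu v hv
  rcases le_total (diagIndex u) (diagIndex v) with h | h
  · exact key (diagIndex v - diagIndex u).toNat u hu v hv (by omega)
  · exact (key (diagIndex u - diagIndex v).toNat v hv u hu (by omega)).symm

lemma Thin.diagIndex_mem_uIcc_of_SE (hth : Thin τ) (hsk : IsSkew τ) (hu : u ∈ τ) (hw : w ∈ τ)
    (huv : SE u v) (hvw : SE v w) : diagIndex v ∈ Set.uIcc (diagIndex u) (diagIndex w) := by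
  rw [Set.mem_uIcc]
  unfold SE at huv hvw
  rcases le_total (diagIndex u) (diagIndex w) with h | h
  · have := hth.nEr_of_diagIndex_le hsk hu hw h
    unfold NEr diagIndex at *
    omega
  · have := hth.nEr_of_diagIndex_le hsk hw hu h
    unfold NEr diagIndex at *
    omega

lemma IsRibbon.exists_image_diagIndex_eq_Ico (hτ : IsRibbon τ) :
    ∃ d₀, diagIndex '' ↑τ = Set.Ico d₀ (d₀ + (#τ : ℤ)) := by
  obtain ⟨hne, -, hcn, hth⟩ := hτ
  set D := τ.image diagIndex with hD
  have hDne : D.Nonempty := hne.image diagIndex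
  have hDcard : #D = #τ := card_image_of_injOn hth.injOn_diagIndex
  have hDIcc : D = Icc (D.min' hDne) (D.max' hDne) := by
    ext d
    refine ⟨fun hd => mem_Icc.mpr ⟨min'_le _ _ hd, le_max' _ _ hd⟩, fun hd => ?_⟩
    have hmem : ∀ d, d ∈ D ↔ d ∈ diagIndex '' ↑τ := fun d => by rw [hD, ← mem_coe, coe_image]
    exact (hmem d).mpr (hcn.ordConnected_image_diagIndex.out ((hmem _).mp (D.min'_mem hDne))
      ((hmem _).mp (D.max'_mem hDne)) (mem_Icc.mp hd))
  have hcoe : (D : Set ℤ) = Set.Icc (D.min' hDne) (D.max' hDne) := by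
    rw [← coe_Icc]
    exact congrArg _ hDIcc
  have hcard : (#D : ℤ) = D.max' hDne + 1 - D.min' hDne := by
    have := D.min'_le _ (D.max'_mem hDne)
    rw [congrArg card hDIcc, Int.card_Icc]
    omega
  refine ⟨D.min' hDne, ?_⟩
  rw [← hDcard, ← coe_image, ← hD, hcoe, hcard]
  ext d
  simp only [Set.mem_Icc, Set.mem_Ico]
  omega

def diagWindow (τ : Finset Node) (a b : ℤ) : Finset Node :=
  τ.filter fun u => a ≤ diagIndex u ∧ diagIndex u < b

lemma diagWindow_subset (τ : Finset Node) (a b : ℤ) : diagWindow τ a b ⊆ τ :=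
  filter_subset _ _

lemma image_diagIndex_diagWindow (τ : Finset Node) (a b : ℤ) :
    diagIndex '' ↑(diagWindow τ a b) = diagIndex '' ↑τ ∩ Set.Ico a b := by
  ext d
  simp only [diagWindow, coe_filter, Set.mem_image, Set.mem_ofPred_eq, Set.mem_inter_iff,
    Set.mem_Ico]
  grind

lemma Thin.mono {σ : Finset Node} (hth : Thin τ) (h : σ ⊆ τ) : Thin σ :=
  fun u hu v hv => hth u (h hu) v (h hv)

lemma Thin.isSkew_diagWindow (hth : Thin τ) (hsk : IsSkew τ) (a b : ℤ) :
    IsSkew (diagWindow τ a b) := by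
  intro u hu w hw v huv hvw
  simp only [diagWindow, mem_filter] at hu hw ⊢
  have := hth.diagIndex_mem_uIcc_of_SE hsk hu.1 hw.1 huv hvw
  rw [Set.mem_uIcc] at this
  exact ⟨hsk u hu.1 w hw.1 v huv hvw, by omega⟩

lemma isRibbon_diagWindow {a b : ℤ} (hτ : IsRibbon τ) (hne : (diagWindow τ a b).Nonempty) :
    IsRibbon (diagWindow τ a b) := by
  obtain ⟨-, hsk, hcn, hth⟩ := hτ
  refine ⟨hne, hth.isSkew_diagWindow hsk a b, ?_, hth.mono (diagWindow_subset τ a b)⟩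
  refine (hth.mono (diagWindow_subset τ a b)).isConnectedShape (hth.isSkew_diagWindow hsk a b) ?_
  rw [image_diagIndex_diagWindow]
  exact hcn.ordConnected_image_diagIndex.inter Set.ordConnected_Ico

def UpStep (τ : Finset Node) (d : ℤ) : Prop :=
  ∃ p ∈ τ, diagIndex p = d ∧ p + (-1, 0) ∈ τ

def RightStep (τ : Finset Node) (d : ℤ) : Prop :=
  ∃ p ∈ τ, diagIndex p = d ∧ p + (0, 1) ∈ τ

lemma Thin.not_upStep_and_rightStep (hth : Thin τ) (d : ℤ) : ¬(UpStep τ d ∧ RightStep τ d) := by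
  rintro ⟨⟨p, hp, hpd, hpu⟩, ⟨q, hq, hqd, hqr⟩⟩
  obtain rfl : p = q := hth p hp q hq (hpd.trans hqd.symm)
  have := hth _ hpu _ hqr (by simp; ring)
  simp [Prod.ext_iff] at this

variable {a b : ℤ}

lemma not_upStep_of_image_subset (h : diagIndex '' ↑τ ⊆ Set.Ico a b) : ¬UpStep τ (a - 1) :=
  fun ⟨p, hp, hpd, _⟩ => by
    have := h (Set.mem_image_of_mem diagIndex hp)
    simp only [Set.mem_Ico] at this
    omega

lemma not_rightStep_of_image_subset (h : diagIndex '' ↑τ ⊆ Set.Ico a b) :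
    ¬RightStep τ (b - 1) :=
  fun ⟨p, _, hpd, hpr⟩ => by
    have := h (Set.mem_image_of_mem diagIndex hpr)
    simp only [Set.mem_Ico, diagIndex, Prod.fst_add, Prod.snd_add] at this hpd
    omega

/-- A node below diagonal `a` that is SE of a node on or above it lies in the same column, so
the ribbon climbs that column across diagonal `a`. -/
lemma Thin.upStep_of_SE (hth : Thin τ) (hsk : IsSkew τ) (hgap : (diagIndex '' ↑τ).OrdConnected)
    (hu : u ∈ τ) (hv : v ∈ τ) (huv : SE u v) (hva : diagIndex v < a) (hau : a ≤ diagIndex u) :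
    UpStep τ (a - 1) := by
  obtain ⟨p, hp, hpd⟩ := hgap.out ⟨v, hv, rfl⟩ ⟨u, hu, rfl⟩
    (⟨by omega, by omega⟩ : a - 1 ∈ Set.Icc _ _)
  obtain ⟨q, hq, hqd⟩ := hgap.out ⟨v, hv, rfl⟩ ⟨u, hu, rfl⟩ (⟨by omega, hau⟩ : a ∈ Set.Icc _ _)
  have hvp := hth.nEr_of_diagIndex_le hsk hv hp (by omega)
  have hpq := hth.nEr_of_diagIndex_le hsk hp hq (by omega)
  have hqu := hth.nEr_of_diagIndex_le hsk hq hu (by omega)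
  obtain rfl : q = p + (-1, 0) := by
    unfold NEr SE diagIndex at *
    ext <;> simp <;> omega
  exact ⟨p, hp, hpd, hq⟩

lemma Thin.rightStep_of_SE (hth : Thin τ) (hsk : IsSkew τ)
    (hgap : (diagIndex '' ↑τ).OrdConnected) (hu : u ∈ τ) (hv : v ∈ τ) (huv : SE u v)
    (hub : diagIndex u < b) (hbv : b ≤ diagIndex v) : RightStep τ (b - 1) := by
  obtain ⟨p, hp, hpd⟩ := hgap.out ⟨u, hu, rfl⟩ ⟨v, hv, rfl⟩
    (⟨by omega, by omega⟩ : b - 1 ∈ Set.Icc _ _)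
  obtain ⟨q, hq, hqd⟩ := hgap.out ⟨u, hu, rfl⟩ ⟨v, hv, rfl⟩ (⟨by omega, hbv⟩ : b ∈ Set.Icc _ _)
  have hup := hth.nEr_of_diagIndex_le hsk hu hp (by omega)
  have hpq := hth.nEr_of_diagIndex_le hsk hp hq (by omega)
  have hqv := hth.nEr_of_diagIndex_le hsk hq hv (by omega)
  obtain rfl : q = p + (0, 1) := by
    unfold NEr SE diagIndex at *
    ext <;> simp <;> omega
  exact ⟨p, hp, hpd, hq⟩

lemma Thin.seRemovable_diagWindow (hth : Thin τ) (hsk : IsSkew τ)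
    (hgap : (diagIndex '' ↑τ).OrdConnected) (hup : ¬UpStep τ (a - 1))
    (hright : ¬RightStep τ (b - 1)) : SERemovable τ (diagWindow τ a b) := by
  refine ⟨diagWindow_subset τ a b, fun u hu v hv huv => ?_⟩
  simp only [diagWindow, mem_sdiff, mem_filter, not_and, not_lt] at hu hv
  rcases lt_or_ge (diagIndex v) a with hva | hav
  · exact hup (hth.upStep_of_SE hsk hgap hu.1 hv.1 huv hva hu.2.1)
  · exact hright (hth.rightStep_of_SE hsk hgap hu.1 hv.1 huv hu.2.2 (hv.2 hv.1 hav))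

lemma sum_cont (e : ℕ) [NeZero e] (τ : Finset Node) : ∑ i, cont e τ i = #τ := by
  simp only [cont]
  rw [card_eq_sum_card_fiberwise (f := res e) (t := univ) fun _ _ => mem_univ _]
  push_cast
  rfl

lemma card_eq_mul_of_cont_eq {e m : ℕ} [NeZero e] (hc : cont e τ = fun _ => (m : ℤ)) :
    (#τ : ℤ) = e * m := by
  rw [← sum_cont e, hc]
  simp

/-- A window of `e` consecutive occupied diagonals meets every residue class exactly once. -/
lemma Thin.cont_diagWindow {e : ℕ} (he : 0 < e) (hth : Thin τ)
    (hfull : Set.Ico a (a + e) ⊆ diagIndex '' ↑τ) :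
    cont e (diagWindow τ a (a + e)) = deltaR e := by
  have : NeZero e := ⟨he.ne'⟩
  have hinj := (hth.mono (diagWindow_subset τ a (a + e))).injOn_diagIndex
  have himage : (diagWindow τ a (a + e)).image diagIndex = Ico a (a + e) := by
    apply coe_injective
    rw [coe_image, image_diagIndex_diagWindow, coe_Ico, Set.inter_eq_right.mpr hfull]
  have hcard : #(diagWindow τ a (a + e)) = Fintype.card (ZMod e) := by
    rw [ZMod.card, ← card_image_of_injOn hinj, himage, Int.card_Ico]
    omega
  have hres : Set.InjOn (res e) ↑(diagWindow τ a (a + e)) := by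
    intro u hu v hv h
    apply hinj hu hv
    have hdvd := (ZMod.intCast_eq_intCast_iff_dvd_sub (diagIndex u) (diagIndex v) e).mp h
    simp only [diagWindow, coe_filter, Set.mem_ofPred_eq] at hu hv
    have := Int.eq_zero_of_abs_lt_dvd hdvd (abs_sub_lt_iff.mpr ⟨by omega, by omega⟩)
    omega
  funext i
  simp only [cont, deltaR, card_filter_eq_one_of_injOn hres hcard i, Nat.cast_one]

/-- Among the windows starting at `d₀ + k e`, take the last one (`k < m`) that is not entered by an
up step: the next one is, and an up step out of diagonal `a + e - 1` excludes a right step. -/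
lemma Thin.exists_window_not_upStep_not_rightStep (hth : Thin τ) {d₀ : ℤ} {e m : ℕ}
    (hm : 1 ≤ m) (hdiag : diagIndex '' ↑τ = Set.Ico d₀ (d₀ + e * m)) :
    ∃ a, d₀ ≤ a ∧ a + e ≤ d₀ + e * m ∧ ¬UpStep τ (a - 1) ∧ ¬RightStep τ (a + e - 1) := by
  have hfirst : ¬UpStep τ (d₀ + (0 : ℕ) * e - 1) := by
    simpa using not_upStep_of_image_subset hdiag.subset
  obtain ⟨k, hkm, hentry, hexit⟩ := Nat.exists_lt_and_succ_eq_or_not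
    (P := fun k : ℕ => ¬UpStep τ (d₀ + k * e - 1)) hfirst hm
  have hkm' : ((k : ℤ) + 1) * e ≤ m * e := by gcongr; exact_mod_cast hkm
  refine ⟨d₀ + k * e, le_add_of_nonneg_right (by positivity), by linarith, hentry, ?_⟩
  rcases hexit with hlast | hup
  · have hend : d₀ + k * e + e = d₀ + e * m := by
      rw [← hlast]
      push_cast
      ring
    simpa [hend] using not_rightStep_of_image_subset hdiag.subset
  · refine fun hright => hth.not_upStep_and_rightStep _ ⟨?_, hright⟩
    convert not_not.mp hup using 2
    push_cast
    ring

end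

theorem stmt14 (e : ℕ) (he : 1 < e) (ν : Finset Node) (hν : IsRibbon ν)
    (m : ℕ) (hm : 1 ≤ m) (hc : cont e ν = fun _ => (m : ℤ)) :
    ∃ ξ : Finset Node, IsRibbon ξ ∧ SERemovable ν ξ ∧ cont e ξ = deltaR e := by
  have : NeZero e := ⟨by omega⟩
  obtain ⟨d₀, hdiag⟩ := hν.exists_image_diagIndex_eq_Ico
  rw [card_eq_mul_of_cont_eq hc] at hdiag
  have hgap : (diagIndex '' ↑ν).OrdConnected := hdiag ▸ Set.ordConnected_Ico
  obtain ⟨-, hsk, -, hth⟩ := id hν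
  obtain ⟨a, hd₀a, hae, hup, hright⟩ := hth.exists_window_not_upStep_not_rightStep hm hdiag
  have hwindow : Set.Ico a (a + e) ⊆ diagIndex '' ↑ν := hdiag ▸ Set.Ico_subset_Ico hd₀a hae
  obtain ⟨u, hu, hua⟩ := hwindow (Set.left_mem_Ico.mpr (by omega))
  exact ⟨diagWindow ν a (a + e), isRibbon_diagWindow hν ⟨u, mem_filter.mpr ⟨hu, by omega⟩⟩,
    hth.seRemovable_diagWindow hsk hgap hup hright, hth.cont_diagWindow (by omega) hwindow⟩
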